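/- arXiv:2511.09002 — 6 statements merged into one kernel-verified Lean document; each statement's English description precedes it below -/
import Mathlib

section
/- Let Y₁ > 0 be a fixed positive random variable and Y₂, Y₃, … i.i.d. positive random variables (independent of Y₁) with E[Y₂] < ∞ and E[1/Y₂] < ∞, and E[Y₁] < ∞, E[Y₁/Y₂] < ∞. Then K·Y₁/(Y₁ + ∑_{k=2}^K Y_k) → Y₁/E[Y₂] almost surely and in L¹ as K → ∞. -/
/-!
Almost surely, `(Y₀ + ⋯ + Y_{K-1}) / K → E[Y₁]` by the strong law of large numbers, which gives
the pointwise limit. For the `L¹` limit it then suffices, by Vitali's convergence theorem, that the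
weights are uniformly integrable. The AM–HM inequality bounds the `K`-th weight by the average of
the ratios `Y₀ / Y_k` over `k < K`; these ratios are identically distributed for `k ≥ 1`, hence
uniformly integrable, and averaging preserves uniform integrability.
-/

open MeasureTheory ProbabilityTheory Filter Topology Finset

theorem card_mul_div_sum_le_inv_card_mul_sum_div {R ι : Type*} [Field R] [LinearOrder R]
    [IsStrictOrderedRing R] (s : Finset ι) {a : ι → R} (ha : ∀ i ∈ s, 0 < a i) {x : R}
    (hx : 0 ≤ x) :
    #s * x / ∑ i ∈ s, a i ≤ (#s : R)⁻¹ * ∑ i ∈ s, x / a i := by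
  rcases s.eq_empty_or_nonempty with rfl | hs
  · simp
  have hn : (0 : R) < #s := by exact_mod_cast hs.card_pos
  have hA : 0 < ∑ i ∈ s, a i := sum_pos ha hs
  have titu : (#s : R) ^ 2 / ∑ i ∈ s, a i ≤ ∑ i ∈ s, 1 / a i := by
    simpa using sq_sum_div_le_sum_sq_div s (fun _ => (1 : R)) ha
  calc #s * x / ∑ i ∈ s, a i = x / #s * ((#s : R) ^ 2 / ∑ i ∈ s, a i) := by
        field_simp
    _ ≤ x / #s * ∑ i ∈ s, 1 / a i := by gcongr
    _ = (#s : R)⁻¹ * ∑ i ∈ s, x / a i := by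
        rw [mul_sum, mul_sum]
        refine sum_congr rfl fun i _ => ?_
        ring

theorem tendsto_sum_range_div_of_tendsto_sum_range_succ_div {x : ℕ → ℝ} {m : ℝ}
    (h : Tendsto (fun n : ℕ => (∑ i ∈ range n, x (i + 1)) / n) atTop (𝓝 m)) :
    Tendsto (fun n : ℕ => (∑ i ∈ range n, x i) / n) atTop (𝓝 m) := by
  rw [← tendsto_add_atTop_iff_nat 1]
  have hfirst : Tendsto (fun n : ℕ => x 0 / ((n + 1 : ℕ) : ℝ)) atTop (𝓝 0) :=
    (tendsto_const_div_atTop_nhds_zero_nat (x 0)).comp (tendsto_add_atTop_nat 1)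
  have hrest := h.mul (tendsto_natCast_div_add_atTop (1 : ℝ))
  rw [mul_one] at hrest
  have hsum := hfirst.add hrest
  rw [zero_add] at hsum
  refine hsum.congr' ?_
  filter_upwards [eventually_ge_atTop 1] with n hn
  have hn' : (n : ℝ) ≠ 0 := by positivity
  rw [sum_range_succ', add_comm]
  push_cast
  field_simp

namespace MeasureTheory

variable {α ι : Type*} [MeasurableSpace α] {μ : Measure α}

section

variable {β γ : Type*} [NormedAddCommGroup β] [NormedAddCommGroup γ] {p : ENNReal}
  {f : ι → α → β} {g : ι → α → γ}

theorem UnifIntegrable.mono (hg : UnifIntegrable g p μ)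
    (h : ∀ i, ∀ᵐ x ∂μ, ‖f i x‖ ≤ ‖g i x‖) : UnifIntegrable f p μ := by
  intro ε hε
  obtain ⟨δ, hδ, hgδ⟩ := hg hε
  refine ⟨δ, hδ, fun i s hs hμs => (eLpNorm_mono_ae ?_).trans (hgδ i s hs hμs)⟩
  filter_upwards [h i] with x hx
  by_cases hxs : x ∈ s <;> simp [hxs, hx]

theorem UniformIntegrable.mono (hg : UniformIntegrable g p μ)
    (hf : ∀ i, AEStronglyMeasurable (f i) μ) (h : ∀ i, ∀ᵐ x ∂μ, ‖f i x‖ ≤ ‖g i x‖) :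
    UniformIntegrable f p μ := by
  obtain ⟨-, hgu, C, hC⟩ := hg
  exact ⟨hf, hgu.mono h, C, fun i => (eLpNorm_mono_ae (h i)).trans (hC i)⟩

end

theorem tendsto_integral_norm_sub_of_tendsto_eLpNorm_one {E : Type*} [NormedAddCommGroup E]
    {l : Filter ι} {f : ι → α → E} {g : α → E} (hf : ∀ i, AEStronglyMeasurable (f i) μ)
    (hg : AEStronglyMeasurable g μ) (h : Tendsto (fun i => eLpNorm (f i - g) 1 μ) l (𝓝 0)) :
    Tendsto (fun i => ∫ x, ‖f i x - g x‖ ∂μ) l (𝓝 0) := by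
  have := (ENNReal.tendsto_toReal ENNReal.zero_ne_top).comp h
  refine this.congr fun i => ?_
  rw [Function.comp_apply, eLpNorm_one_eq_lintegral_enorm,
    ← integral_norm_eq_lintegral_enorm ((hf i).sub hg)]
  rfl

theorem integral_pos_of_forall_pos [NeZero μ] {f : α → ℝ} (hpos : ∀ x, 0 < f x)
    (hf : Integrable f μ) : 0 < ∫ x, f x ∂μ := by
  rw [integral_pos_iff_support_of_nonneg (fun x => (hpos x).le) hf,
    Function.support_eq_univ fun x => (hpos x).ne', pos_iff_ne_zero, Ne,
    Measure.measure_univ_eq_zero]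
  exact NeZero.ne μ

end MeasureTheory

section

variable {Ω : Type*} {Y : ℕ → Ω → ℝ}

/-- The weight `K Y₁ / (Y₁ + ⋯ + Y_K)` of the paper, with the variables indexed from `0`. -/
noncomputable def softmaxWeight (Y : ℕ → Ω → ℝ) (K : ℕ) (ω : Ω) : ℝ :=
  K * Y 0 ω / ∑ k ∈ range K, Y k ω

theorem softmaxWeight_eq (Y : ℕ → Ω → ℝ) (K : ℕ) (ω : Ω) :
    softmaxWeight Y K ω = K * Y 0 ω / (Y 0 ω + ∑ k ∈ Ico 1 K, Y k ω) := by
  rcases K.eq_zero_or_pos with rfl | hK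
  · simp [softmaxWeight]
  · rw [softmaxWeight, sum_range_eq_add_Ico _ hK]

theorem softmaxWeight_nonneg (hpos : ∀ k ω, 0 < Y k ω) (K : ℕ) (ω : Ω) :
    0 ≤ softmaxWeight Y K ω :=
  div_nonneg (mul_nonneg K.cast_nonneg (hpos 0 ω).le) (sum_nonneg fun k _ => (hpos k ω).le)

theorem softmaxWeight_le_average_div (hpos : ∀ k ω, 0 < Y k ω) (K : ℕ) (ω : Ω) :
    softmaxWeight Y K ω ≤ (K : ℝ)⁻¹ * ∑ k ∈ range K, Y 0 ω / Y k ω := by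
  have h := card_mul_div_sum_le_inv_card_mul_sum_div (range K) (fun k _ => hpos k ω)
    (hpos 0 ω).le
  rwa [card_range] at h

variable [MeasurableSpace Ω] {μ : Measure Ω}

theorem measurable_softmaxWeight (hmeas : ∀ k, Measurable (Y k)) (K : ℕ) :
    Measurable (softmaxWeight Y K) :=
  (measurable_const.mul (hmeas 0)).div (Finset.measurable_sum _ fun k _ => hmeas k)

theorem ae_tendsto_sum_range_div (hindep : iIndepFun Y μ)
    (hident : ∀ k, 1 ≤ k → IdentDistrib (Y k) (Y 1) μ μ) (hint : Integrable (Y 1) μ) :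
    ∀ᵐ ω ∂μ, Tendsto (fun n : ℕ => (∑ k ∈ range n, Y k ω) / n) atTop (𝓝 (∫ ω, Y 1 ω ∂μ)) := by
  have hslln := strong_law_ae_real (μ := μ) (fun i => Y (i + 1)) hint
    (fun i j hij => hindep.indepFun (by simpa using hij))
    (fun i => hident (i + 1) (Nat.le_add_left 1 i))
  filter_upwards [hslln] with ω hω
  exact tendsto_sum_range_div_of_tendsto_sum_range_succ_div hω

theorem ae_tendsto_softmaxWeight (hindep : iIndepFun Y μ)
    (hident : ∀ k, 1 ≤ k → IdentDistrib (Y k) (Y 1) μ μ) (hint : Integrable (Y 1) μ)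
    (hm : ∫ ω, Y 1 ω ∂μ ≠ 0) :
    ∀ᵐ ω ∂μ, Tendsto (softmaxWeight Y · ω) atTop (𝓝 (Y 0 ω / ∫ ω, Y 1 ω ∂μ)) := by
  filter_upwards [ae_tendsto_sum_range_div hindep hident hint] with ω hω
  refine ((tendsto_const_nhds (x := Y 0 ω)).div hω hm).congr fun K => ?_
  simp only [Pi.div_apply, softmaxWeight, div_div_eq_mul_div, mul_comm]

theorem identDistrib_div_of_iIndepFun [IsFiniteMeasure μ] (hmeas : Measurable (Y 0))
    (hindep : iIndepFun Y μ) {k : ℕ} (hk : 1 ≤ k) (hident : IdentDistrib (Y k) (Y 1) μ μ) :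
    IdentDistrib (fun ω => Y 0 ω / Y k ω) (fun ω => Y 0 ω / Y 1 ω) μ μ :=
  ((IdentDistrib.refl hmeas.aemeasurable).prodMk hident (hindep.indepFun (by omega))
    (hindep.indepFun (by omega))).comp (measurable_fst.div measurable_snd)

theorem uniformIntegrable_div [IsProbabilityMeasure μ] (hmeas : ∀ k, Measurable (Y k))
    (hpos : ∀ k ω, 0 < Y k ω) (hindep : iIndepFun Y μ)
    (hident : ∀ k, 1 ≤ k → IdentDistrib (Y k) (Y 1) μ μ)
    (hint : Integrable (fun ω => Y 0 ω / Y 1 ω) μ) :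
    UniformIntegrable (fun k ω => Y 0 ω / Y k ω) 1 μ := by
  -- `Y 0 / Y 0 = 1` is not distributed like the other ratios, but it is below `1 + Y 0 / Y 1`.
  have hdom : UniformIntegrable (fun k ω => 1 + Y 0 ω / Y (max k 1) ω) 1 μ := by
    refine MemLp.uniformIntegrable_of_identDistrib (j := 1) le_rfl ENNReal.one_ne_top
      (memLp_one_iff_integrable.2 ((integrable_const 1).add hint)) fun k => ?_
    exact (identDistrib_div_of_iIndepFun (hmeas 0) hindep (le_max_right k 1)
      (hident _ (le_max_right k 1))).comp (measurable_const_add 1)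
  refine hdom.mono (fun k => ((hmeas 0).div (hmeas k)).aestronglyMeasurable)
    fun k => ae_of_all _ fun ω => ?_
  have h0 : 0 ≤ Y 0 ω / Y k ω := (div_pos (hpos 0 ω) (hpos k ω)).le
  have h1 : 0 ≤ Y 0 ω / Y (max k 1) ω := (div_pos (hpos 0 ω) (hpos _ ω)).le
  rw [Real.norm_of_nonneg h0, Real.norm_of_nonneg (by positivity)]
  rcases k.eq_zero_or_pos with rfl | hk
  · rw [div_self (hpos 0 ω).ne']
    linarith
  · rw [max_eq_left hk]
    linarith

theorem unifIntegrable_softmaxWeight [IsProbabilityMeasure μ] (hmeas : ∀ k, Measurable (Y k))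
    (hpos : ∀ k ω, 0 < Y k ω) (hindep : iIndepFun Y μ)
    (hident : ∀ k, 1 ≤ k → IdentDistrib (Y k) (Y 1) μ μ)
    (hint : Integrable (fun ω => Y 0 ω / Y 1 ω) μ) :
    UnifIntegrable (softmaxWeight Y) 1 μ := by
  refine (uniformIntegrable_average le_rfl
    (uniformIntegrable_div hmeas hpos hindep hident hint)).unifIntegrable.mono
    fun K => ae_of_all _ fun ω => ?_
  have hbound := softmaxWeight_le_average_div hpos K ω
  have hw := softmaxWeight_nonneg hpos K ω
  simp only [Pi.smul_apply, Finset.sum_apply, smul_eq_mul]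
  rw [Real.norm_of_nonneg hw, Real.norm_of_nonneg (hw.trans hbound)]
  exact hbound

end

theorem softmax_weight_L1_limit_general
    {Ω : Type*} [MeasurableSpace Ω] (μ : Measure Ω) [IsProbabilityMeasure μ]
    (Y : ℕ → Ω → ℝ)
    (hmeas : ∀ k, Measurable (Y k))
    (hpos : ∀ k ω, 0 < Y k ω)
    (hindep : iIndepFun Y μ)
    (hid : ∀ k, 1 ≤ k → Measure.map (Y k) μ = Measure.map (Y 1) μ)
    (hY1 : Integrable (Y 1) μ)
    (hY0 : Integrable (Y 0) μ)
    (hY0Y1 : Integrable (fun ω => Y 0 ω / Y 1 ω) μ) :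
    (∀ᵐ ω ∂μ, Tendsto
        (fun K : ℕ => (K : ℝ) * Y 0 ω / (Y 0 ω + ∑ k ∈ Finset.Ico 1 K, Y k ω))
        atTop (nhds (Y 0 ω / ∫ ω', Y 1 ω' ∂μ)))
    ∧ Tendsto
        (fun K : ℕ => ∫ ω, |(K : ℝ) * Y 0 ω / (Y 0 ω + ∑ k ∈ Finset.Ico 1 K, Y k ω)
            - Y 0 ω / ∫ ω', Y 1 ω' ∂μ| ∂μ)
        atTop (nhds 0) := by
  have hident : ∀ k, 1 ≤ k → IdentDistrib (Y k) (Y 1) μ μ :=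
    fun k hk => ⟨(hmeas k).aemeasurable, (hmeas 1).aemeasurable, hid k hk⟩
  have hm : ∫ ω, Y 1 ω ∂μ ≠ 0 := (integral_pos_of_forall_pos (hpos 1) hY1).ne'
  simp_rw [← softmaxWeight_eq]
  have hae := ae_tendsto_softmaxWeight hindep hident hY1 hm
  have hfm : ∀ K, AEStronglyMeasurable (softmaxWeight Y K) μ :=
    fun K => (measurable_softmaxWeight hmeas K).aestronglyMeasurable
  have hg : Integrable (fun ω => Y 0 ω / ∫ ω, Y 1 ω ∂μ) μ := hY0.div_const _
  have hL1 := tendsto_Lp_finite_of_tendsto_ae le_rfl ENNReal.one_ne_top hfm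
    (memLp_one_iff_integrable.2 hg) (unifIntegrable_softmaxWeight hmeas hpos hindep hident hY0Y1)
    hae
  exact ⟨hae, tendsto_integral_norm_sub_of_tendsto_eLpNorm_one hfm hg.1 hL1⟩

/-- Mean-field limit of the softmax weight: if `Y₀ > 0` and `Y₁, Y₂, …` are
i.i.d. positive random variables independent of `Y₀`, with `E[Y₁] < ∞`,
`E[1/Y₁] < ∞`, `E[Y₀] < ∞` and `E[Y₀/Y₁] < ∞`, then
`K·Y₀/(Y₀ + ∑_{k=1}^{K-1} Y_k) → Y₀/E[Y₁]` almost surely and in `L¹`. -/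
theorem softmax_weight_L1_limit
    {Ω : Type*} [MeasurableSpace Ω] (μ : Measure Ω) [IsProbabilityMeasure μ]
    (Y : ℕ → Ω → ℝ)
    (hmeas : ∀ k, Measurable (Y k))
    (hpos : ∀ k ω, 0 < Y k ω)
    (hindep : iIndepFun Y μ)
    (hid : ∀ k, 1 ≤ k → Measure.map (Y k) μ = Measure.map (Y 1) μ)
    (hY1 : Integrable (Y 1) μ)
    (hY1inv : Integrable (fun ω => (Y 1 ω)⁻¹) μ)
    (hY0 : Integrable (Y 0) μ)
    (hY0Y1 : Integrable (fun ω => Y 0 ω / Y 1 ω) μ) :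
    (∀ᵐ ω ∂μ, Tendsto
        (fun K : ℕ => (K : ℝ) * Y 0 ω / (Y 0 ω + ∑ k ∈ Finset.Ico 1 K, Y k ω))
        atTop (nhds (Y 0 ω / ∫ ω', Y 1 ω' ∂μ)))
    ∧ Tendsto
        (fun K : ℕ => ∫ ω, |(K : ℝ) * Y 0 ω / (Y 0 ω + ∑ k ∈ Finset.Ico 1 K, Y k ω)
            - Y 0 ω / ∫ ω', Y 1 ω' ∂μ| ∂μ)
        atTop (nhds 0) :=
  softmax_weight_L1_limit_general μ Y hmeas hpos hindep hid hY1 hY0 hY0Y1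
end

section
/- Let Q : X → (0, Q*] with ess sup Q = Q* < ∞, and let p_{t+1} = p_t·Q/E_{p_t}[Q] be the mean-field self-consuming update with E_{p₀}[Q] > 0 and P₀({Q = Q*}) > 0. Then lim_{t→∞} E_{X∼p_t}[Q(X)] = Q*. -/
open MeasureTheory Filter Topology

/-! Unrolling the update gives `p_t = Q^t p₀ / M_t` with moments `M_t = ∫ Q^t p₀`, so the expected
reward is the moment ratio `M_{t+1} / M_t`. The normalised moments `M_t / Q*^t` decrease (as
`Q ≤ Q*`) and stay above `P₀({Q = Q*}) > 0`, so they converge to a positive limit; hence the ratio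
of two consecutive ones tends to `1` and the expected reward to `Q*`. -/

theorem tendsto_succ_div_of_antitone {g : ℕ → ℝ} {a : ℝ} (hg : Antitone g) (ha : 0 < a)
    (hga : ∀ t, a ≤ g t) : Tendsto (fun t => g (t + 1) / g t) atTop (𝓝 1) := by
  have hlim := tendsto_atTop_ciInf hg ⟨a, by rintro _ ⟨t, rfl⟩; exact hga t⟩
  have hpos : 0 < ⨅ t, g t := ha.trans_le (le_ciInf hga)
  have hratio := (hlim.comp (tendsto_add_atTop_nat 1)).div hlim hpos.ne'
  rwa [div_self hpos.ne'] at hratio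

section Moments

variable {X : Type*} [MeasurableSpace X] {μ : Measure X} {Q f : X → ℝ} {c : ℝ}

theorem setIntegral_pos_of_withDensity_ne_zero {s : Set X} (hs : MeasurableSet s)
    (hf : Integrable f μ) (hf0 : ∀ᵐ x ∂μ, 0 ≤ f x)
    (h : μ.withDensity (fun x => ENNReal.ofReal (f x)) s ≠ 0) : 0 < ∫ x in s, f x ∂μ := by
  rw [← ENNReal.ofReal_pos, ofReal_integral_eq_lintegral_ofReal hf.restrict
    (ae_restrict_of_ae hf0), ← withDensity_apply _ hs]
  exact pos_iff_ne_zero.2 h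

theorem integrable_pow_mul (hf : Integrable f μ) (hQm : AEStronglyMeasurable Q μ)
    (hQ : ∀ᵐ x ∂μ, ‖Q x‖ ≤ c) (t : ℕ) : Integrable (fun x => Q x ^ t * f x) μ :=
  hf.bdd_mul (hQm.pow t) <| hQ.mono fun x hx => by
    rw [norm_pow]; exact pow_le_pow_left₀ (norm_nonneg _) hx t

theorem integral_mul_pow_mul_div (t : ℕ) :
    ∫ x, Q x * (Q x ^ t * f x / ∫ y, Q y ^ t * f y ∂μ) ∂μ
      = (∫ x, Q x ^ (t + 1) * f x ∂μ) / ∫ x, Q x ^ t * f x ∂μ := by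
  rw [← integral_div]
  congr 1 with x
  ring

theorem pow_mul_setIntegral_le_integral_pow_mul (hQm : Measurable Q) (t : ℕ)
    (hint : Integrable (fun x => Q x ^ t * f x) μ) (hQ0 : ∀ᵐ x ∂μ, 0 ≤ Q x)
    (hf0 : ∀ᵐ x ∂μ, 0 ≤ f x) :
    c ^ t * ∫ x in {x | Q x = c}, f x ∂μ ≤ ∫ x, Q x ^ t * f x ∂μ := by
  have hA : MeasurableSet {x | Q x = c} := hQm (measurableSet_singleton c)
  calc c ^ t * ∫ x in {x | Q x = c}, f x ∂μ
      = ∫ x in {x | Q x = c}, Q x ^ t * f x ∂μ := by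
        rw [← integral_const_mul]
        exact setIntegral_congr_fun hA fun x (hx : Q x = c) => by rw [hx]
    _ ≤ ∫ x, Q x ^ t * f x ∂μ := setIntegral_le_integral hint <| by
        filter_upwards [hQ0, hf0] with x hQx hfx using by positivity

theorem integral_pow_succ_mul_le (t : ℕ) (hint : ∀ n, Integrable (fun x => Q x ^ n * f x) μ)
    (hQ0 : ∀ᵐ x ∂μ, 0 ≤ Q x) (hQc : ∀ᵐ x ∂μ, Q x ≤ c) (hf0 : ∀ᵐ x ∂μ, 0 ≤ f x) :
    ∫ x, Q x ^ (t + 1) * f x ∂μ ≤ c * ∫ x, Q x ^ t * f x ∂μ := by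
  rw [← integral_const_mul]
  refine integral_mono_ae (hint (t + 1)) ((hint t).const_mul c) ?_
  filter_upwards [hQ0, hQc, hf0] with x hQx hQcx hfx
  rw [pow_succ', mul_assoc]
  exact mul_le_mul_of_nonneg_right hQcx (by positivity)

theorem integrable_pow_mul_of_nonneg_of_le (hQm : Measurable Q) (hf : Integrable f μ)
    (hQ0 : ∀ᵐ x ∂μ, 0 ≤ Q x) (hQc : ∀ᵐ x ∂μ, Q x ≤ c) (t : ℕ) :
    Integrable (fun x => Q x ^ t * f x) μ :=
  integrable_pow_mul hf hQm.aestronglyMeasurable (by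
    filter_upwards [hQ0, hQc] with x hQx hQcx
    rwa [Real.norm_of_nonneg hQx]) t

theorem integral_pow_mul_pos (hQm : Measurable Q) (hf : Integrable f μ)
    (hf0 : ∀ᵐ x ∂μ, 0 ≤ f x) (hQ0 : ∀ᵐ x ∂μ, 0 ≤ Q x) (hQc : ∀ᵐ x ∂μ, Q x ≤ c) (hc : 0 < c)
    (hA : 0 < ∫ x in {x | Q x = c}, f x ∂μ) (t : ℕ) : 0 < ∫ x, Q x ^ t * f x ∂μ :=
  (mul_pos (pow_pos hc t) hA).trans_le <| pow_mul_setIntegral_le_integral_pow_mul hQm t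
    (integrable_pow_mul_of_nonneg_of_le hQm hf hQ0 hQc t) hQ0 hf0

theorem tendsto_integral_pow_succ_mul_div (hQm : Measurable Q) (hf : Integrable f μ)
    (hf0 : ∀ᵐ x ∂μ, 0 ≤ f x) (hQ0 : ∀ᵐ x ∂μ, 0 ≤ Q x) (hQc : ∀ᵐ x ∂μ, Q x ≤ c) (hc : 0 < c)
    (hA : 0 < ∫ x in {x | Q x = c}, f x ∂μ) :
    Tendsto (fun t => (∫ x, Q x ^ (t + 1) * f x ∂μ) / ∫ x, Q x ^ t * f x ∂μ) atTop (𝓝 c) := by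
  set M : ℕ → ℝ := fun t => ∫ x, Q x ^ t * f x ∂μ
  have hint := integrable_pow_mul_of_nonneg_of_le hQm hf hQ0 hQc
  have hlower (t : ℕ) : c ^ t * ∫ x in {x | Q x = c}, f x ∂μ ≤ M t :=
    pow_mul_setIntegral_le_integral_pow_mul hQm t (hint t) hQ0 hf0
  have hanti : Antitone fun t => M t / c ^ t := antitone_nat_of_succ_le fun t => by
    rw [div_le_div_iff₀ (by positivity) (by positivity), pow_succ]
    have := mul_le_mul_of_nonneg_right (integral_pow_succ_mul_le t hint hQ0 hQc hf0)
      (pow_pos hc t).le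
    linarith
  have hratio := (tendsto_succ_div_of_antitone hanti hA fun t => by
    rw [le_div_iff₀ (by positivity), mul_comm]; exact hlower t).const_mul c
  rw [mul_one] at hratio
  refine hratio.congr fun t => ?_
  have hMt := (integral_pow_mul_pos hQm hf hf0 hQ0 hQc hc hA t).ne'
  simp only [M]
  rw [pow_succ]
  field_simp

theorem eq_pow_mul_div_integral_of_succ_eq {p : ℕ → X → ℝ} (hp0 : ∫ x, p 0 x ∂μ = 1)
    (hM : ∀ t, ∫ x, Q x ^ t * p 0 x ∂μ ≠ 0)
    (hrec : ∀ t x, p (t + 1) x = p t x * Q x / ∫ y, Q y * p t y ∂μ) (t : ℕ) :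
    p t = fun x => Q x ^ t * p 0 x / ∫ y, Q y ^ t * p 0 y ∂μ := by
  induction t with
  | zero => simp [hp0]
  | succ t ih =>
    ext x
    rw [hrec, ih, integral_mul_pow_mul_div]
    have := hM t
    field_simp
    ring

end Moments

theorem selfconsuming_reward_tendsto_max_general
    {X : Type*} [MeasurableSpace X] (π : Measure X)
    (Q : X → ℝ) (hQm : Measurable Q)
    (Qstar : ℝ) (hQstar : 0 < Qstar) (hQ : ∀ x, 0 < Q x ∧ Q x ≤ Qstar)
    (p : ℕ → X → ℝ)
    (hp0nn : ∀ x, 0 ≤ p 0 x)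
    (hp0int : Integrable (p 0) π) (hp0den : ∫ x, p 0 x ∂π = 1)
    (hrec : ∀ t x, p (t + 1) x = p t x * Q x / (∫ y, Q y * p t y ∂π))
    (hA : (π.withDensity fun x => ENNReal.ofReal (p 0 x)) {x | Q x = Qstar} ≠ 0) :
    Tendsto (fun t => ∫ x, Q x * p t x ∂π) atTop (nhds Qstar) := by
  have hf0 : ∀ᵐ x ∂π, 0 ≤ p 0 x := ae_of_all _ hp0nn
  have hQ0 : ∀ᵐ x ∂π, 0 ≤ Q x := ae_of_all _ fun x => (hQ x).1.le
  have hQc : ∀ᵐ x ∂π, Q x ≤ Qstar := ae_of_all _ fun x => (hQ x).2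
  have hmass : 0 < ∫ x in {x | Q x = Qstar}, p 0 x ∂π :=
    setIntegral_pos_of_withDensity_ne_zero (hQm (measurableSet_singleton Qstar)) hp0int hf0 hA
  have hp := eq_pow_mul_div_integral_of_succ_eq hp0den
    (fun t => (integral_pow_mul_pos hQm hp0int hf0 hQ0 hQc hQstar hmass t).ne') hrec
  refine (tendsto_integral_pow_succ_mul_div hQm hp0int hf0 hQ0 hQc hQstar hmass).congr fun t => ?_
  rw [hp t]
  exact (integral_mul_pow_mul_div t).symm

/-- Under the mean-field self-consuming update `p_{t+1} = p_t·Q/E_{p_t}[Q]`, with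
`E_{p₀}[Q] > 0` and positive initial mass on the maximizer set `{Q = Q*}`,
the expected reward converges to `Q*`. -/
theorem selfconsuming_reward_tendsto_max
    {X : Type*} [MeasurableSpace X] (π : Measure X) [SigmaFinite π]
    (Q : X → ℝ) (hQm : Measurable Q)
    (Qstar : ℝ) (hQstar : 0 < Qstar) (hQ : ∀ x, 0 < Q x ∧ Q x ≤ Qstar)
    (p : ℕ → X → ℝ)
    (hp0m : Measurable (p 0)) (hp0nn : ∀ x, 0 ≤ p 0 x)
    (hp0int : Integrable (p 0) π) (hp0den : ∫ x, p 0 x ∂π = 1)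
    (hrec : ∀ t x, p (t + 1) x = p t x * Q x / (∫ y, Q y * p t y ∂π))
    (hC0 : 0 < ∫ x, Q x * p 0 x ∂π)
    (hA : (π.withDensity fun x => ENNReal.ofReal (p 0 x)) {x | Q x = Qstar} ≠ 0) :
    Tendsto (fun t => ∫ x, Q x * p t x ∂π) atTop (nhds Qstar) :=
  selfconsuming_reward_tendsto_max_general π Q hQm Qstar hQstar hQ p hp0nn hp0int hp0den hrec hA
end

section
/- Under the mean-field self-consuming update p_{t+1} = p_t·Q/E_{p_t}[Q] with P₀(A) > 0 where A = {Q = Q*}, the density ratio on A satisfies p_t(x) = P_t(A)·p₀(x)/P₀(A) for all x ∈ A, the KL divergence satisfies D_KL(p* ‖ p_t) = -log P_t(A) where p* = p₀·1_A/P₀(A), and if E_{p_t}[Q] → Q* then D_KL(p* ‖ p_t) → 0 as t → ∞. -/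
/-!
Unrolling the recursion gives `p_t = Q^t p₀ / ∏_{s<t} E_{p_s}[Q]`. Hence `p_t` is a constant
multiple `κ_t = P_t(A) / P₀(A)` of `p₀` on `A = {Q = Q*}`, which makes the log-ratio in the KL
integral constant, and `p_t ≤ κ_t p₀ ≤ p₀ / P₀(A)` everywhere. For the limit, Markov's inequality
bounds the `p_t`-mass of `{Q ≤ Q* - ε}` by `(Q* - E_{p_t}[Q]) / ε`, and the domination by
`p₀ / P₀(A)` bounds the mass of `{Q* - ε < Q < Q*}` uniformly in `t` by a quantity vanishing as
`ε → 0`; so `P_t(A) → 1`.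
-/

open MeasureTheory Filter Set Topology

section

variable {X : Type*} [MeasurableSpace X] {μ : Measure X}

structure IsProbDensity (μ : Measure X) (f : X → ℝ) : Prop where
  nonneg : ∀ x, 0 ≤ f x
  integrable : Integrable f μ
  integral_eq_one : ∫ x, f x ∂μ = 1

namespace IsProbDensity

variable {f g Q : X → ℝ} {M : ℝ}

lemma setIntegral_le_one (hf : IsProbDensity μ f) (s : Set X) : ∫ x in s, f x ∂μ ≤ 1 :=
  hf.integral_eq_one ▸ setIntegral_le_integral hf.integrable (Eventually.of_forall hf.nonneg)

lemma setIntegral_compl (hf : IsProbDensity μ f) {s : Set X} (hs : MeasurableSet s) :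
    ∫ x in sᶜ, f x ∂μ = 1 - ∫ x in s, f x ∂μ := by
  rw [← hf.integral_eq_one, ← integral_add_compl hs hf.integrable]
  ring

lemma integrable_mul (hf : IsProbDensity μ f) (hQm : AEStronglyMeasurable Q μ)
    (hQM : ∀ x, |Q x| ≤ M) : Integrable (fun x => Q x * f x) μ :=
  hf.integrable.bdd_mul hQm (Eventually.of_forall hQM)

lemma integral_mul_pos (hf : IsProbDensity μ f) (hQ : ∀ x, 0 < Q x)
    (hQf : Integrable (fun x => Q x * f x) μ) : 0 < ∫ x, Q x * f x ∂μ := by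
  have hsupp : Function.support (fun x => Q x * f x) = Function.support f :=
    Function.support_mul_of_ne_zero_left (fun x => (hQ x).ne') f
  rw [integral_pos_iff_support_of_nonneg (fun x => mul_nonneg (hQ x).le (hf.nonneg x)) hQf, hsupp,
    ← integral_pos_iff_support_of_nonneg hf.nonneg hf.integrable, hf.integral_eq_one]
  exact one_pos

lemma tilt (hf : IsProbDensity μ f) (hQm : AEStronglyMeasurable Q μ)
    (hQ : ∀ x, 0 < Q x ∧ Q x ≤ M) :
    IsProbDensity μ (fun x => f x * Q x / ∫ y, Q y * f y ∂μ) := by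
  have hQf : Integrable (fun x => Q x * f x) μ :=
    hf.integrable_mul hQm fun x => (abs_of_pos (hQ x).1).le.trans (hQ x).2
  have hpos := hf.integral_mul_pos (fun x => (hQ x).1) hQf
  simp_rw [mul_comm (f _)]
  refine ⟨fun x => div_nonneg (mul_nonneg (hQ x).1.le (hf.nonneg x)) hpos.le,
    hQf.div_const _, ?_⟩
  rw [integral_div, div_self hpos.ne']

lemma mul_setIntegral_le_sub_integral_mul (hf : IsProbDensity μ f) (hQm : Measurable Q)
    (hQf : Integrable (fun x => Q x * f x) μ) (hQ : ∀ x, Q x ≤ M) (ε : ℝ) :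
    ε * ∫ x in {x | Q x ≤ M - ε}, f x ∂μ ≤ M - ∫ x, Q x * f x ∂μ := by
  have hint : Integrable (fun x => (M - Q x) * f x) μ := by
    simp_rw [sub_mul]
    exact (hf.integrable.const_mul M).sub hQf
  calc ε * ∫ x in {x | Q x ≤ M - ε}, f x ∂μ
      = ∫ x in {x | Q x ≤ M - ε}, ε * f x ∂μ := (integral_const_mul _ _).symm
    _ ≤ ∫ x in {x | Q x ≤ M - ε}, (M - Q x) * f x ∂μ :=
      setIntegral_mono_on (hf.integrable.const_mul ε).integrableOn hint.integrableOn
        (measurableSet_le hQm measurable_const)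
        fun x hx => mul_le_mul_of_nonneg_right (by linarith [hx.out]) (hf.nonneg x)
    _ ≤ ∫ x, (M - Q x) * f x ∂μ := setIntegral_le_integral hint
      (Eventually.of_forall fun x => mul_nonneg (sub_nonneg.2 (hQ x)) (hf.nonneg x))
    _ = M - ∫ x, Q x * f x ∂μ := by
      simp_rw [sub_mul]
      rw [integral_sub (hf.integrable.const_mul M) hQf, integral_const_mul, hf.integral_eq_one,
        mul_one]

lemma one_sub_setIntegral_eq_max_le (hf : IsProbDensity μ f) (hQm : Measurable Q)
    (hQf : Integrable (fun x => Q x * f x) μ) (hQ : ∀ x, Q x ≤ M) (hg : Integrable g μ)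
    (hfg : ∀ x, f x ≤ g x) {ε : ℝ} (hε : 0 < ε) :
    1 - ∫ x in {x | Q x = M}, f x ∂μ
      ≤ (M - ∫ x, Q x * f x ∂μ) / ε + ∫ x in Q ⁻¹' Ioo (M - ε) M, g x ∂μ := by
  have hsplit : {x | Q x = M}ᶜ = {x | Q x ≤ M - ε} ∪ Q ⁻¹' Ioo (M - ε) M := by
    ext x
    have := hQ x
    simp only [mem_compl_iff, mem_ofPred_eq, mem_union, mem_preimage, mem_Ioo]
    grind
  have hdisj : Disjoint {x | Q x ≤ M - ε} (Q ⁻¹' Ioo (M - ε) M) :=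
    disjoint_left.2 fun x hle hIoo => (not_le.2 hIoo.1) hle
  rw [← hf.setIntegral_compl (measurableSet_eq_fun hQm measurable_const), hsplit,
    setIntegral_union hdisj (hQm measurableSet_Ioo) hf.integrable.integrableOn
      hf.integrable.integrableOn]
  gcongr ?_ + ?_
  · rw [le_div_iff₀ hε, mul_comm]
    exact hf.mul_setIntegral_le_sub_integral_mul hQm hQf hQ ε
  · exact setIntegral_mono hf.integrable.integrableOn hg.integrableOn hfg

end IsProbDensity

lemma tendsto_setIntegral_preimage_Ioo_sub_one_div {g Q : X → ℝ} (hQm : Measurable Q)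
    (hg : Integrable g μ) (M : ℝ) :
    Tendsto (fun n : ℕ => ∫ x in Q ⁻¹' Ioo (M - 1 / (n + 1)) M, g x ∂μ) atTop (𝓝 0) := by
  have hanti : Antitone fun n : ℕ => Q ⁻¹' Ioo (M - 1 / (n + 1)) M := fun m n hmn =>
    preimage_mono (Ioo_subset_Ioo_left (by gcongr))
  have hempty : ⋂ n : ℕ, Q ⁻¹' Ioo (M - 1 / (n + 1)) M = ∅ := by
    refine eq_empty_of_forall_notMem fun x hx => ?_
    simp only [mem_iInter, mem_preimage, mem_Ioo] at hx
    obtain ⟨n, hn⟩ := exists_nat_one_div_lt (sub_pos.2 (hx 0).2)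
    linarith [(hx n).1]
  have :=
    tendsto_setIntegral_of_antitone (fun n => hQm measurableSet_Ioo) hanti ⟨0, hg.integrableOn⟩
  rwa [hempty, Measure.restrict_empty, integral_zero_measure] at this

theorem tendsto_setIntegral_eq_max {f : ℕ → X → ℝ} {g Q : X → ℝ} {M : ℝ} (hQm : Measurable Q)
    (hQ : ∀ x, Q x ≤ M) (hf : ∀ t, IsProbDensity μ (f t))
    (hQf : ∀ t, Integrable (fun x => Q x * f t x) μ) (hg : Integrable g μ)
    (hfg : ∀ t x, f t x ≤ g x) (hconv : Tendsto (fun t => ∫ x, Q x * f t x ∂μ) atTop (𝓝 M)) :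
    Tendsto (fun t => ∫ x in {x | Q x = M}, f t x ∂μ) atTop (𝓝 1) := by
  refine tendsto_order.2 ⟨fun b hb => ?_,
    fun b hb => Eventually.of_forall fun t => ((hf t).setIntegral_le_one _).trans_lt hb⟩
  obtain ⟨n, hn⟩ := ((tendsto_setIntegral_preimage_Ioo_sub_one_div hQm hg M).eventually
    (gt_mem_nhds (half_pos (sub_pos.2 hb)))).exists
  have hε : (0 : ℝ) < 1 / (n + 1) := Nat.one_div_pos_of_nat
  have hδ : 0 < 1 / (n + 1) * ((1 - b) / 2) := mul_pos hε (half_pos (sub_pos.2 hb))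
  filter_upwards [hconv.eventually (lt_mem_nhds (sub_lt_self M hδ))] with t ht
  have hbound := (hf t).one_sub_setIntegral_eq_max_le hQm (hQf t) hQ hg (hfg t) hε
  have : (M - ∫ x, Q x * f t x ∂μ) / (1 / (n + 1)) < (1 - b) / 2 := by
    rw [div_lt_iff₀ hε]; linarith
  linarith

lemma setIntegral_mul_log_div_eq_of_eqOn {f g : X → ℝ} {c : ℝ} {s : Set X} (hs : MeasurableSet s)
    (h : ∀ x ∈ s, g x = c * f x) :
    ∫ x in s, f x * Real.log (f x / g x) ∂μ = -Real.log c * ∫ x in s, f x ∂μ := by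
  rw [← integral_const_mul]
  refine setIntegral_congr_fun hs fun x hx => ?_
  rcases eq_or_ne (f x) 0 with h0 | h0
  · simp [h0]
  · rw [h x hx, div_mul_cancel_right₀ h0, Real.log_inv, mul_comm]

section Iteration

variable {α K : Type*} [Field K] {p : ℕ → α → K} {Q : α → K} {c : ℕ → K}

lemma eq_pow_mul_div_prod_of_succ_eq (hrec : ∀ t x, p (t + 1) x = p t x * Q x / c t) (t : ℕ)
    (x : α) : p t x = Q x ^ t * p 0 x / ∏ s ∈ Finset.range t, c s := by
  induction t with
  | zero => simp
  | succ t ih => rw [hrec, ih, Finset.prod_range_succ]; ring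

lemma le_pow_div_prod_mul_of_succ_eq [LinearOrder K] [IsStrictOrderedRing K]
    (hrec : ∀ t x, p (t + 1) x = p t x * Q x / c t) (hc : ∀ t, 0 < c t) {M : K}
    (hQ : ∀ x, 0 ≤ Q x ∧ Q x ≤ M) (hp0 : ∀ x, 0 ≤ p 0 x) (t : ℕ) (x : α) :
    p t x ≤ M ^ t / (∏ s ∈ Finset.range t, c s) * p 0 x := by
  rw [eq_pow_mul_div_prod_of_succ_eq hrec, div_mul_eq_mul_div]
  have := Finset.prod_pos fun s (_ : s ∈ Finset.range t) => hc s
  gcongr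
  exacts [hp0 x, (hQ x).1, (hQ x).2]

end Iteration

lemma isProbDensity_of_succ_eq_tilt {p : ℕ → X → ℝ} {Q : X → ℝ} {M : ℝ}
    (hQm : AEStronglyMeasurable Q μ) (hQ : ∀ x, 0 < Q x ∧ Q x ≤ M) (h0 : IsProbDensity μ (p 0))
    (hrec : ∀ t x, p (t + 1) x = p t x * Q x / ∫ y, Q y * p t y ∂μ) :
    ∀ t, IsProbDensity μ (p t)
  | 0 => h0
  | t + 1 => funext (hrec t) ▸ (isProbDensity_of_succ_eq_tilt hQm hQ h0 hrec t).tilt hQm hQ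

end

theorem selfconsuming_KL_convergence_general
    {X : Type*} [MeasurableSpace X] (π : Measure X)
    (Q : X → ℝ) (hQm : Measurable Q)
    (Qstar : ℝ) (hQ : ∀ x, 0 < Q x ∧ Q x ≤ Qstar)
    (p : ℕ → X → ℝ)
    (hp0nn : ∀ x, 0 ≤ p 0 x)
    (hp0int : Integrable (p 0) π) (hp0den : ∫ x, p 0 x ∂π = 1)
    (hrec : ∀ t x, p (t + 1) x = p t x * Q x / (∫ y, Q y * p t y ∂π))
    (A : Set X) (hA : A = {x | Q x = Qstar}) (hAmeas : MeasurableSet A)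
    (PA : ℕ → ℝ) (hPA : ∀ t, PA t = ∫ x in A, p t x ∂π)
    (hPA0 : 0 < PA 0) :
    (∀ t, ∀ x ∈ A, p t x = PA t * p 0 x / PA 0)
    ∧ (∀ t, ∫ x in A, (p 0 x / PA 0) *
          Real.log ((p 0 x / PA 0) / p t x) ∂π = - Real.log (PA t))
    ∧ (Tendsto (fun t => ∫ x, Q x * p t x ∂π) atTop (nhds Qstar) →
        Tendsto (fun t => - Real.log (PA t)) atTop (nhds 0)) := by
  subst hA
  have hdens :=
    isProbDensity_of_succ_eq_tilt hQm.aestronglyMeasurable hQ ⟨hp0nn, hp0int, hp0den⟩ hrec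
  have hQp t : Integrable (fun x => Q x * p t x) π := (hdens t).integrable_mul
    hQm.aestronglyMeasurable fun x => (abs_of_pos (hQ x).1).le.trans (hQ x).2
  set κ : ℕ → ℝ := fun t => Qstar ^ t / ∏ s ∈ Finset.range t, ∫ y, Q y * p s y ∂π
  have hon t x (hx : Q x = Qstar) : p t x = κ t * p 0 x := by
    rw [eq_pow_mul_div_prod_of_succ_eq hrec, hx, div_mul_eq_mul_div]
  have hPAκ t : PA t = κ t * PA 0 := by
    rw [hPA, hPA, ← integral_const_mul]
    exact setIntegral_congr_fun hAmeas fun x hx => hon t x hx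
  have hκ t : κ t = PA t / PA 0 := by
    rw [hPAκ, mul_div_cancel_right₀ _ hPA0.ne']
  have hon' t x (hx : Q x = Qstar) : p t x = PA t * p 0 x / PA 0 := by
    rw [hon t x hx, hκ, div_mul_eq_mul_div]
  refine ⟨hon', fun t => ?_, fun hconv => ?_⟩
  · rw [setIntegral_mul_log_div_eq_of_eqOn hAmeas fun x hx => by rw [hon' t x hx]; ring,
      integral_div, ← hPA, div_self hPA0.ne', mul_one]
  · have hle t x : p t x ≤ p 0 x / PA 0 := by
      calc p t x ≤ κ t * p 0 x := le_pow_div_prod_mul_of_succ_eq hrec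
            (fun s => (hdens s).integral_mul_pos (fun x => (hQ x).1) (hQp s))
            (fun x => ⟨(hQ x).1.le, (hQ x).2⟩) hp0nn t x
        _ = PA t * (p 0 x / PA 0) := by rw [hκ]; ring
        _ ≤ p 0 x / PA 0 := mul_le_of_le_one_left (div_nonneg (hp0nn x) hPA0.le)
            (hPA t ▸ (hdens t).setIntegral_le_one _)
    have hPA1 : Tendsto PA atTop (𝓝 1) := by
      rw [funext hPA]
      exact tendsto_setIntegral_eq_max hQm (fun x => (hQ x).2) hdens hQp (hp0int.div_const _)
        hle hconv
    simpa using ((Real.continuousAt_log one_ne_zero).tendsto.comp hPA1).neg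

/-- Under the mean-field self-consuming update `p_{t+1} = p_t·Q/E_{p_t}[Q]` with
positive initial mass on the maximizer set `A = {Q = Q*}`:
(1) on `A`, `p_t = P_t(A)·p₀/P₀(A)`;
(2) `D_KL(p* ‖ p_t) = -log P_t(A)` where `p* = p₀·1_A/P₀(A)`;
(3) if `E_{p_t}[Q] → Q*` then `D_KL(p* ‖ p_t) → 0`. -/
theorem selfconsuming_KL_convergence
    {X : Type*} [MeasurableSpace X] (π : Measure X) [SigmaFinite π]
    (Q : X → ℝ) (hQm : Measurable Q)
    (Qstar : ℝ) (hQstar : 0 < Qstar) (hQ : ∀ x, 0 < Q x ∧ Q x ≤ Qstar)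
    (p : ℕ → X → ℝ)
    (hp0m : Measurable (p 0)) (hp0nn : ∀ x, 0 ≤ p 0 x)
    (hp0int : Integrable (p 0) π) (hp0den : ∫ x, p 0 x ∂π = 1)
    (hrec : ∀ t x, p (t + 1) x = p t x * Q x / (∫ y, Q y * p t y ∂π))
    (hC0 : 0 < ∫ x, Q x * p 0 x ∂π)
    (A : Set X) (hA : A = {x | Q x = Qstar}) (hAmeas : MeasurableSet A)
    (PA : ℕ → ℝ) (hPA : ∀ t, PA t = ∫ x in A, p t x ∂π)
    (hPA0 : 0 < PA 0) :
    (∀ t, ∀ x ∈ A, p t x = PA t * p 0 x / PA 0)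
    ∧ (∀ t, ∫ x in A, (p 0 x / PA 0) *
          Real.log ((p 0 x / PA 0) / p t x) ∂π = - Real.log (PA t))
    ∧ (Tendsto (fun t => ∫ x, Q x * p t x ∂π) atTop (nhds Qstar) →
        Tendsto (fun t => - Real.log (PA t)) atTop (nhds 0)) :=
  selfconsuming_KL_convergence_general π Q hQm Qstar hQ p hp0nn hp0int hp0den hrec A hA hAmeas PA
    hPA hPA0
end

section
/- Under the self-consuming update p_{t+1} = p_t·H_t with H_t a measurable multiplier satisfying ∫ p_t H_t dπ = 1, H_t > 0, and H_t constant equal to its supremum h_t := sup_x H_t(x) on the set A = {Q = Q*} with P₀(A) > 0: for every t ≥ 1, p_t = (∏_{s<t} h_s)·p₀ on A, P_t(A) = P₀(A)·∏_{s<t} h_s, ∏_{s<t} h_s ≤ 1/P₀(A), h_t ≥ 1 implies h_t → 1 as t → ∞, and p_t(x) ≤ p₀(x)/P₀(A) for all x. -/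
/-!
Unrolling the update gives `p_t = p₀ · ∏_{s<t} H_s`. On `A` every factor equals its maximum `h_s`,
so the mass of `A` is multiplied by exactly `h_s` at each step; since this mass can never exceed the
total mass `1`, the partial products `∏_{s<t} h_s` are bounded by `1 / P₀(A)`. Being nondecreasing
(as `h_s ≥ 1`) they converge to a positive limit, so their successive ratios `h_t` tend to `1`.
Off `A` each factor is only bounded by `h_s`, which gives `p_t ≤ p₀ / P₀(A)` everywhere.
-/

open MeasureTheory Filter Finset Topology

theorem eq_mul_prod_range_of_succ {M : Type*} [CommMonoid M] {f g : ℕ → M}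
    (hf : ∀ t, f (t + 1) = f t * g t) (t : ℕ) : f t = f 0 * ∏ s ∈ range t, g s := by
  induction t with
  | zero => simp
  | succ t ih => rw [hf, ih, prod_range_succ, mul_assoc]

theorem tendsto_nhds_one_of_bddAbove_prod_range {h : ℕ → ℝ} (hone : ∀ t, 1 ≤ h t)
    (hbdd : BddAbove (Set.range fun t => ∏ s ∈ range t, h s)) : Tendsto h atTop (𝓝 1) := by
  set P : ℕ → ℝ := fun t => ∏ s ∈ range t, h s
  have hP1 : ∀ t, 1 ≤ P t := fun t => one_le_prod fun s _ => hone s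
  have hmono : Monotone P := monotone_nat_of_le_succ fun t => by
    simp only [P, prod_range_succ]
    exact le_mul_of_one_le_right (zero_le_one.trans (hP1 t)) (hone t)
  have hlim := tendsto_atTop_ciSup hmono hbdd
  have hL0 : (⨆ t, P t) ≠ 0 := (one_pos.trans_le ((hP1 0).trans (le_ciSup hbdd 0))).ne'
  have hratio := (hlim.comp (tendsto_add_atTop_nat 1)).div hlim hL0
  rw [div_self hL0] at hratio
  refine hratio.congr fun t => ?_
  simp only [Pi.div_apply, Function.comp_apply, P, prod_range_succ]
  exact mul_div_cancel_left₀ _ (zero_lt_one.trans_le (hP1 t)).ne'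

theorem setIntegral_le_one_of_integral_eq_one {X : Type*} [MeasurableSpace X] {μ : Measure X}
    {f : X → ℝ} (hf : 0 ≤ f) (hf1 : ∫ x, f x ∂μ = 1) (s : Set X) : ∫ x in s, f x ∂μ ≤ 1 :=
  hf1 ▸ setIntegral_le_integral (.of_integral_ne_zero (hf1 ▸ one_ne_zero)) (.of_forall hf)

theorem selfconsuming_mass_dynamics_general
    {X : Type*} [MeasurableSpace X] (π : Measure X)
    (p : ℕ → X → ℝ) (H : ℕ → X → ℝ) (h : ℕ → ℝ) (A : Set X)
    (hAmeas : MeasurableSet A)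
    (hp0nn : ∀ x, 0 ≤ p 0 x)
    (hp0den : ∫ x, p 0 x ∂π = 1)
    (hHpos : ∀ t x, 0 < H t x)
    (hHle : ∀ t x, H t x ≤ h t)
    (hHA : ∀ t, ∀ x ∈ A, H t x = h t)
    (hHnorm : ∀ t, ∫ x, p t x * H t x ∂π = 1)
    (hrec : ∀ t x, p (t + 1) x = p t x * H t x)
    (hone : ∀ t, 1 ≤ h t)
    (hPA0 : 0 < ∫ x in A, p 0 x ∂π) :
    (∀ t, ∀ x ∈ A, p t x = (∏ s ∈ Finset.range t, h s) * p 0 x)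
    ∧ (∀ t, ∫ x in A, p t x ∂π
        = (∫ x in A, p 0 x ∂π) * ∏ s ∈ Finset.range t, h s)
    ∧ (∀ t, (∏ s ∈ Finset.range t, h s) ≤ 1 / ∫ x in A, p 0 x ∂π)
    ∧ Tendsto h atTop (nhds 1)
    ∧ (∀ t x, p t x ≤ p 0 x / ∫ y in A, p 0 y ∂π) := by
  have hprod (t x) : p t x = p 0 x * ∏ s ∈ range t, H s x :=
    eq_mul_prod_range_of_succ (f := (p · x)) (fun t => hrec t x) t
  have hnn (t) : 0 ≤ p t := fun x =>
    hprod t x ▸ mul_nonneg (hp0nn x) (prod_nonneg fun s _ => (hHpos s x).le)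
  have hmass : ∀ t, ∫ x, p t x ∂π = 1
    | 0 => hp0den
    | t + 1 => by simpa only [hrec] using hHnorm t
  have hA (t) : ∀ x ∈ A, p t x = (∏ s ∈ range t, h s) * p 0 x := fun x hx => by
    rw [hprod, mul_comm, prod_congr rfl fun s _ => hHA s x hx]
  have hmassA (t) : ∫ x in A, p t x ∂π = (∫ x in A, p 0 x ∂π) * ∏ s ∈ range t, h s := by
    rw [setIntegral_congr_fun hAmeas (hA t), integral_const_mul, mul_comm]
  have hbound (t) : ∏ s ∈ range t, h s ≤ 1 / ∫ x in A, p 0 x ∂π := by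
    rw [le_div_iff₀ hPA0, mul_comm, ← hmassA]
    exact setIntegral_le_one_of_integral_eq_one (hnn t) (hmass t) A
  refine ⟨hA, hmassA, hbound,
    tendsto_nhds_one_of_bddAbove_prod_range hone ⟨_, Set.forall_mem_range.2 hbound⟩,
    fun t x => ?_⟩
  calc p t x = p 0 x * ∏ s ∈ range t, H s x := hprod t x
    _ ≤ p 0 x * (1 / ∫ y in A, p 0 y ∂π) := mul_le_mul_of_nonneg_left
        ((prod_le_prod (fun s _ => (hHpos s x).le) fun s _ => hHle s x).trans (hbound t)) (hp0nn x)
    _ = p 0 x / ∫ y in A, p 0 y ∂π := mul_one_div _ _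

/-- Mass dynamics on the maximizer set for the self-consuming update
`p_{t+1} = p_t·H_t`, where `H_t > 0` is a normalized multiplier (`∫ p_t H_t dπ = 1`)
bounded by `h_t` and attaining `h_t` on `A`, with `P₀(A) > 0` and `h_t ≥ 1`:
the density ratio, mass-product identity, product bound, `h_t → 1`, and uniform
domination `p_t ≤ p₀/P₀(A)` all hold. -/
theorem selfconsuming_mass_dynamics
    {X : Type*} [MeasurableSpace X] (π : Measure X) [SigmaFinite π]
    (p : ℕ → X → ℝ) (H : ℕ → X → ℝ) (h : ℕ → ℝ) (A : Set X)
    (hAmeas : MeasurableSet A)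
    (hp0m : Measurable (p 0)) (hp0nn : ∀ x, 0 ≤ p 0 x)
    (hp0int : Integrable (p 0) π) (hp0den : ∫ x, p 0 x ∂π = 1)
    (hHm : ∀ t, Measurable (H t))
    (hHpos : ∀ t x, 0 < H t x)
    (hHle : ∀ t x, H t x ≤ h t)
    (hHA : ∀ t, ∀ x ∈ A, H t x = h t)
    (hHint : ∀ t, Integrable (fun x => p t x * H t x) π)
    (hHnorm : ∀ t, ∫ x, p t x * H t x ∂π = 1)
    (hrec : ∀ t x, p (t + 1) x = p t x * H t x)
    (hone : ∀ t, 1 ≤ h t)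
    (hPA0 : 0 < ∫ x in A, p 0 x ∂π) :
    (∀ t, ∀ x ∈ A, p t x = (∏ s ∈ Finset.range t, h s) * p 0 x)
    ∧ (∀ t, ∫ x in A, p t x ∂π
        = (∫ x in A, p 0 x ∂π) * ∏ s ∈ Finset.range t, h s)
    ∧ (∀ t, (∏ s ∈ Finset.range t, h s) ≤ 1 / ∫ x in A, p 0 x ∂π)
    ∧ Tendsto h atTop (nhds 1)
    ∧ (∀ t x, p t x ≤ p 0 x / ∫ y in A, p 0 y ∂π) :=
  selfconsuming_mass_dynamics_general π p H h A hAmeas hp0nn hp0den hHpos hHle hHA hHnorm hrec hone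
    hPA0
end

section
/- Let K ≥ 2 be finite, p a probability density, and Δr ∈ L^∞ with ‖Δr‖_∞ < ∞. Then for every x, |H_{p,Δr}^K(x) - H_{p,0}^K(x)| ≤ (K/2)·‖Δr‖_∞, where H_{p,Δr}^K(x) = E[K·e^{r(x)+Δr(x)+ε(x)}/(e^{r(x)+Δr(x)+ε(x)} + ∑_{k=1}^{K-1} e^{r(X_k)+Δr(X_k)+ε_k(X_k)})]. -/
/-!
The integrand is the multinomial-logit share `e^u / (e^u + ∑ₖ e^{vₖ})`, which equals
`sigmoid (u - log ∑ₖ e^{vₖ})`. A reward perturbation bounded by `c` moves `u` and the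
log-sum-exp each by at most `c`, so the log-odds move by at most `2c`; since
`sigmoid' = σ(1 - σ) ≤ 1/4`, the share moves by at most `c/2` pointwise, hence so does its
expectation, and the factor `K` gives `(K/2)·c`.
-/

open MeasureTheory ProbabilityTheory

section Logit

open Real

theorem Real.lipschitzWith_sigmoid : LipschitzWith 4⁻¹ sigmoid := by
  refine lipschitzWith_of_nnnorm_deriv_le differentiable_sigmoid fun x => ?_
  rw [← NNReal.coe_le_coe, coe_nnnorm, deriv_sigmoid, NNReal.coe_inv, Real.norm_eq_abs,
    abs_of_nonneg (mul_nonneg (sigmoid_nonneg x) (sub_nonneg.2 (sigmoid_le_one x))),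
    NNReal.coe_ofNat]
  nlinarith [sq_nonneg (sigmoid x - 2⁻¹)]

theorem Real.abs_log_sum_exp_sub_le {ι : Type*} {s : Finset ι} (hs : s.Nonempty) {u v : ι → ℝ}
    {c : ℝ} (h : ∀ k ∈ s, |u k - v k| ≤ c) :
    |log (∑ k ∈ s, exp (u k)) - log (∑ k ∈ s, exp (v k))| ≤ c := by
  have pos : ∀ w : ι → ℝ, 0 < ∑ k ∈ s, exp (w k) :=
    fun w => Finset.sum_pos (fun _ _ => exp_pos _) hs
  have le : ∀ w w' : ι → ℝ, (∀ k ∈ s, w k - w' k ≤ c) →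
      log (∑ k ∈ s, exp (w k)) - log (∑ k ∈ s, exp (w' k)) ≤ c := by
    intro w w' hw
    rw [sub_le_iff_le_add, ← log_exp c, ← log_mul (exp_pos c).ne' (pos w').ne',
      log_le_log_iff (pos w) (mul_pos (exp_pos c) (pos w')), Finset.mul_sum]
    exact Finset.sum_le_sum fun k hk => by
      rw [← exp_add]; exact exp_le_exp.2 (by linarith [hw k hk])
  exact abs_sub_le_iff.2 ⟨le u v fun k hk => (abs_le.1 (h k hk)).2,
    le v u fun k hk => by linarith [(abs_le.1 (h k hk)).1]⟩

variable {ι : Type*} (u : ℝ) (s : Finset ι) (v : ι → ℝ)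

noncomputable def choiceShare : ℝ := exp u / (exp u + ∑ k ∈ s, exp (v k))

theorem choiceShare_nonneg : 0 ≤ choiceShare u s v :=
  div_nonneg (exp_pos u).le
    (add_nonneg (exp_pos u).le (Finset.sum_nonneg fun _ _ => (exp_pos _).le))

theorem choiceShare_le_one : choiceShare u s v ≤ 1 :=
  div_le_one_of_le₀ (le_add_of_nonneg_right (Finset.sum_nonneg fun _ _ => (exp_pos _).le))
    (add_nonneg (exp_pos u).le (Finset.sum_nonneg fun _ _ => (exp_pos _).le))

variable {s}

theorem choiceShare_eq_sigmoid (hs : s.Nonempty) :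
    choiceShare u s v = sigmoid (u - log (∑ k ∈ s, exp (v k))) := by
  rw [choiceShare, sigmoid_def, neg_sub, exp_sub,
    exp_log (Finset.sum_pos (fun _ _ => exp_pos _) hs)]
  field_simp

theorem abs_choiceShare_sub_le (hs : s.Nonempty) {u' c : ℝ} {v' : ι → ℝ} (hu : |u - u'| ≤ c)
    (hv : ∀ k ∈ s, |v k - v' k| ≤ c) :
    |choiceShare u s v - choiceShare u' s v'| ≤ c / 2 := by
  rw [choiceShare_eq_sigmoid u v hs, choiceShare_eq_sigmoid u' v' hs, ← Real.dist_eq]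
  have hlog := Real.abs_log_sum_exp_sub_le hs hv
  calc dist (sigmoid _) (sigmoid _)
      ≤ 4⁻¹ * dist (u - log (∑ k ∈ s, exp (v k))) (u' - log (∑ k ∈ s, exp (v' k))) := by
        exact_mod_cast lipschitzWith_sigmoid.dist_le_mul _ _
    _ ≤ 4⁻¹ * (c + c) := by
        rw [Real.dist_eq, sub_sub_sub_comm]
        gcongr
        exact (abs_sub _ _).trans (add_le_add hu hlog)
    _ = c / 2 := by ring

end Logit

theorem Measurable.choiceShare {ι α : Type*} {s : Finset ι} [MeasurableSpace α] {u : α → ℝ}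
    {v : α → ι → ℝ} (hu : Measurable u) (hv : ∀ k, Measurable fun a => v a k) :
    Measurable fun a => choiceShare (u a) s (v a) := by
  unfold _root_.choiceShare
  fun_prop

theorem abs_integral_sub_integral_le {Ω : Type*} [MeasurableSpace Ω] {μ : Measure Ω}
    [IsProbabilityMeasure μ] {f g : Ω → ℝ} (hf : Integrable f μ) (hg : Integrable g μ) {C : ℝ}
    (h : ∀ ω, |f ω - g ω| ≤ C) :
    |∫ ω, f ω ∂μ - ∫ ω, g ω ∂μ| ≤ C := by
  rw [← integral_sub hf hg]
  simpa using norm_integral_le_of_norm_le_const (μ := μ) (f := fun ω => f ω - g ω) (.of_forall h)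

theorem choice_kernel_reward_lipschitz
    {Ω : Type*} [MeasurableSpace Ω] (μ : Measure Ω) [IsProbabilityMeasure μ]
    {𝒳 : Type*} [MeasurableSpace 𝒳]
    (K : ℕ) (hK : 2 ≤ K)
    (r Δr : 𝒳 → ℝ) (hr : Measurable r) (hΔr : Measurable Δr)
    (c : ℝ) (hc : ∀ x, |Δr x| ≤ c)
    (Xs : Fin K → Ω → 𝒳) (hXs : ∀ k, Measurable (Xs k))
    (εs : Fin K → Ω → 𝒳 → ℝ)
    (hεs : ∀ k, Measurable (fun q : Ω × 𝒳 => εs k q.1 q.2))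
    -- the perturbed choice kernel, for an arbitrary reward function `s`
    (H : (𝒳 → ℝ) → 𝒳 → ℝ)
    (hH : ∀ (s : 𝒳 → ℝ) (x : 𝒳), H s x = (K : ℝ) * ∫ ω,
        Real.exp (s x + εs ⟨0, by omega⟩ ω x)
          / (Real.exp (s x + εs ⟨0, by omega⟩ ω x)
            + ∑ k ∈ Finset.univ.erase ⟨0, by omega⟩,
                Real.exp (s (Xs k ω) + εs k ω (Xs k ω))) ∂μ) :
    ∀ x, |H (fun y => r y + Δr y) x - H r x| ≤ ((K : ℝ) / 2) * c := by
  intro x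
  set z : Fin K := ⟨0, by omega⟩
  have hrivals : (Finset.univ.erase z).Nonempty := ⟨⟨1, by omega⟩, by simp [z, Fin.ext_iff]⟩
  let share (s : 𝒳 → ℝ) (ω : Ω) : ℝ :=
    choiceShare (s x + εs z ω x) (Finset.univ.erase z) fun k => s (Xs k ω) + εs k ω (Xs k ω)
  have integrable_share (s : 𝒳 → ℝ) (hs : Measurable s) : Integrable (share s) μ := by
    refine Integrable.of_bound (Measurable.choiceShare ?_ fun k => ?_).aestronglyMeasurable 1
      (ae_of_all _ fun ω => ?_)
    · exact measurable_const.add ((hεs z).comp (measurable_id.prodMk measurable_const))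
    · exact (hs.comp (hXs k)).add ((hεs k).comp (measurable_id.prodMk (hXs k)))
    · rw [Real.norm_eq_abs, abs_of_nonneg (choiceShare_nonneg ..)]
      exact choiceShare_le_one ..
  have share_close (ω : Ω) : |share (fun y => r y + Δr y) ω - share r ω| ≤ c / 2 :=
    abs_choiceShare_sub_le _ _ hrivals (by rw [add_right_comm, add_sub_cancel_left]; exact hc x)
      fun k _ => by rw [add_right_comm, add_sub_cancel_left]; exact hc _
  calc |H (fun y => r y + Δr y) x - H r x|
      = K * |∫ ω, share (fun y => r y + Δr y) ω ∂μ - ∫ ω, share r ω ∂μ| := by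
        rw [hH, hH, ← mul_sub, abs_mul, Nat.abs_cast]
        rfl
    _ ≤ K * (c / 2) := by
        gcongr
        exact abs_integral_sub_integral_le (integrable_share _ (hr.add hΔr))
          (integrable_share r hr) share_close
    _ = K / 2 * c := by ring
end

section
/- Let Q : X → ℝ be measurable with 0 < (1-α)Q* < Q* := ess sup Q < ∞ under a reference probability measure P_ref, α ∈ (0,1), and assume α > (∫ Q*/(Q* - Q(x)) dP_ref(x))^{-1}. Then there exists a unique c* ∈ ((1-α)Q*, Q*] such that w*(x) = α/(1 - (1-α)Q(x)/c*) is a probability density w.r.t. P_ref, and w* is the unique fixed point of the normalized operator L_N[w] = α + (1-α)·Q·w/⟨w,Q⟩ on densities; moreover ⟨w*, Q⟩ = c*. -/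
/-!
The map `F(c) = ∫ w_c`, `w_c = α / (1 - (1-α) Q / c)`, is continuous and strictly decreasing on
`((1-α) Q*, ∞)`, with `F(Q*) ≤ 1` since `w_{Q*} ≤ 1`, while Fatou's lemma gives
`liminf F(c) ≥ ∫ α Q* / (Q* - Q) > 1` as `c ↓ (1-α) Q*`; so `F(c*) = 1` for exactly one `c*`.
A fixed point `w` of `L_N` with `c = ⟨w, Q⟩ > 0` satisfies `w · (1 - (1-α) Q / c) = α`, so
`w = w_c`, and positivity of `w` forces `(1-α) Q < c` everywhere, hence `(1-α) Q* ≤ c` by the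
essential-supremum condition. Equality is excluded because `∫ w_c > 1` there, and `c ≤ Q*`
because `∫ w = 1`; thus `c = c*`. The remaining identities are pointwise algebra.
-/

open MeasureTheory Set Filter Topology

section Real

variable {α a c : ℝ}

lemma div_one_sub_div_le_div_one_sub_div (hα : 0 ≤ α) (hc : 0 < c) {a' : ℝ} (ha : a ≤ a')
    (ha' : a' < c) : α / (1 - a / c) ≤ α / (1 - a' / c) := by
  gcongr
  exact sub_pos.2 ((div_lt_one hc).2 ha')

lemma strictAntiOn_div_one_sub_div (hα : 0 < α) (ha : 0 < a) :
    StrictAntiOn (fun c => α / (1 - a / c)) (Ioi a) := by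
  intro c hc c' _ hcc'
  have hc0 : 0 < c := ha.trans hc
  dsimp only
  gcongr
  exact sub_pos.2 ((div_lt_one hc0).2 hc)

lemma continuousAt_div_one_sub_div (hc : c ≠ 0) (hac : a ≠ c) :
    ContinuousAt (fun c => α / (1 - a / c)) c := by
  have : 1 - a / c ≠ 0 := sub_ne_zero.2 (div_ne_one_of_ne hac).symm
  fun_prop (disch := assumption)

lemma add_mul_div_one_sub_div (hc : c ≠ 0) (hac : a ≠ c) :
    α + a * (α / (1 - a / c)) / c = α / (1 - a / c) := by
  have : c - a ≠ 0 := sub_ne_zero.2 hac.symm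
  field_simp
  ring

lemma div_one_sub_div_mul {q : ℝ} (hα : α ≠ 1) (hc : c ≠ 0) (hac : (1 - α) * q ≠ c) :
    α / (1 - (1 - α) * q / c) * q = c / (1 - α) * (α / (1 - (1 - α) * q / c) - α) := by
  have : c - (1 - α) * q ≠ 0 := sub_ne_zero.2 hac.symm
  have : 1 - α ≠ 0 := sub_ne_zero.2 hα.symm
  field_simp
  ring

lemma lt_and_eq_div_one_sub_div_of_add_mul_div_eq {w : ℝ} (hα : 0 < α) (hc : 0 < c)
    (hw : 0 ≤ w) (h : α + a * w / c = w) : a < c ∧ w = α / (1 - a / c) := by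
  have hmul : w * (1 - a / c) = α := by linear_combination (-1 : ℝ) * h
  have hpos : 0 < 1 - a / c := pos_of_mul_pos_right (hmul ▸ hα) hw
  exact ⟨(div_lt_one hc).1 (sub_pos.1 hpos), (eq_div_iff hpos.ne').2 hmul⟩

lemma div_one_sub_div_one_sub_mul {Qstar q : ℝ} (hα : α ≠ 1) (hQstar : Qstar ≠ 0) :
    α / (1 - (1 - α) * q / ((1 - α) * Qstar)) = α * (Qstar / (Qstar - q)) := by
  rw [mul_div_mul_left _ _ (sub_ne_zero.2 hα.symm), one_sub_div hQstar, div_div_eq_mul_div,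
    mul_div_assoc]

lemma div_one_sub_div_le_one {Qstar q : ℝ} (hα0 : 0 < α) (hα1 : α ≤ 1) (hqQ : q ≤ Qstar)
    (hQstar : 0 < Qstar) : α / (1 - (1 - α) * q / Qstar) ≤ 1 := by
  have : (1 - α) * q / Qstar ≤ 1 - α := by
    rw [div_le_iff₀ hQstar]; nlinarith
  rw [div_le_one (by linarith)]
  linarith

lemma one_sub_mul_lt_of_le {Qstar q : ℝ} (hα1 : α < 1) (hq : q ≤ Qstar)
    (hc : (1 - α) * Qstar < c) : (1 - α) * q < c :=
  (mul_le_mul_of_nonneg_left hq (sub_nonneg.2 hα1.le)).trans_lt hc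

lemma pos_of_one_sub_mul_lt {Qstar : ℝ} (hα1 : α < 1) (hQstar : 0 < Qstar)
    (hc : (1 - α) * Qstar < c) : 0 < c :=
  (mul_pos (sub_pos.2 hα1) hQstar).trans hc

end Real

noncomputable def fixedPointDensity {X : Type*} (α : ℝ) (Q : X → ℝ) (c : ℝ) (x : X) : ℝ :=
  α / (1 - (1 - α) * Q x / c)

section FixedPointDensity

variable {X : Type*} {Q : X → ℝ} {α Qstar c : ℝ}

lemma fixedPointDensity_pos (hα0 : 0 < α) (hα1 : α < 1) (hQstar : 0 < Qstar)
    (hQle : ∀ x, Q x ≤ Qstar) (hc : (1 - α) * Qstar < c) (x : X) :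
    0 < fixedPointDensity α Q c x :=
  div_pos hα0 (sub_pos.2 ((div_lt_one (pos_of_one_sub_mul_lt hα1 hQstar hc)).2
    (one_sub_mul_lt_of_le hα1 (hQle x) hc)))

lemma tendsto_fixedPointDensity_of_lt {u : ℕ → ℝ} (hα1 : α < 1) (hQstar : 0 < Qstar) {x : X}
    (hx : Q x < Qstar) (hu : Tendsto u atTop (𝓝 ((1 - α) * Qstar))) :
    Tendsto (fun n => fixedPointDensity α Q (u n) x) atTop
      (𝓝 (fixedPointDensity α Q ((1 - α) * Qstar) x)) :=
  (continuousAt_div_one_sub_div (mul_pos (sub_pos.2 hα1) hQstar).ne'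
    (mul_lt_mul_of_pos_left hx (sub_pos.2 hα1)).ne).tendsto.comp hu

-- where the paper's `α Q* / (Q* - Q x)` is infinite, Lean's `α / 0 = 0` gives `0`
lemma fixedPointDensity_eq_zero_of_eq (hα1 : α < 1) (hQstar : 0 < Qstar) {x : X}
    (hx : Q x = Qstar) : fixedPointDensity α Q ((1 - α) * Qstar) x = 0 := by
  rw [fixedPointDensity, hx, div_self (mul_pos (sub_pos.2 hα1) hQstar).ne', sub_self, div_zero]

variable [MeasurableSpace X] {μ : Measure X}

lemma measurable_fixedPointDensity (hQm : Measurable Q) :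
    Measurable (fixedPointDensity α Q c) := by
  unfold fixedPointDensity; fun_prop

lemma integrable_fixedPointDensity [IsFiniteMeasure μ] (hQm : Measurable Q) (hα0 : 0 < α)
    (hα1 : α < 1) (hQstar : 0 < Qstar) (hQle : ∀ x, Q x ≤ Qstar) (hc : (1 - α) * Qstar < c) :
    Integrable (fixedPointDensity α Q c) μ := by
  refine Integrable.mono' (integrable_const (α / (1 - (1 - α) * Qstar / c)))
    (measurable_fixedPointDensity hQm).aestronglyMeasurable (Eventually.of_forall fun x => ?_)
  rw [Real.norm_of_nonneg (fixedPointDensity_pos hα0 hα1 hQstar hQle hc x).le]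
  exact div_one_sub_div_le_div_one_sub_div hα0.le (pos_of_one_sub_mul_lt hα1 hQstar hc)
    (mul_le_mul_of_nonneg_left (hQle x) (sub_nonneg.2 hα1.le)) hc

lemma strictAntiOn_integral_fixedPointDensity [IsFiniteMeasure μ] [NeZero μ]
    (hQm : Measurable Q) (hα0 : 0 < α) (hα1 : α < 1) (hQstar : 0 < Qstar)
    (hQpos : ∀ x, 0 < Q x) (hQle : ∀ x, Q x ≤ Qstar) :
    StrictAntiOn (fun c => ∫ x, fixedPointDensity α Q c x ∂μ) (Ioi ((1 - α) * Qstar)) := by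
  intro c hc c' hc' hcc'
  have hi := integrable_fixedPointDensity (μ := μ) hQm hα0 hα1 hQstar hQle hc
  have hi' := integrable_fixedPointDensity (μ := μ) hQm hα0 hα1 hQstar hQle hc'
  have hlt : ∀ x, fixedPointDensity α Q c' x < fixedPointDensity α Q c x := fun x =>
    have hx := one_sub_mul_lt_of_le hα1 (hQle x) hc
    strictAntiOn_div_one_sub_div hα0 (mul_pos (sub_pos.2 hα1) (hQpos x)) hx
      (hx.trans hcc') hcc'
  have := (integral_pos_iff_support_of_nonneg (fun x => (sub_pos.2 (hlt x)).le)
    (hi.sub hi')).2 (by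
      rw [Function.support_eq_univ fun x => (sub_pos.2 (hlt x)).ne']
      exact NeZero.pos _)
  rw [integral_sub hi hi'] at this
  exact sub_pos.1 this

lemma continuousOn_integral_fixedPointDensity [IsFiniteMeasure μ] (hQm : Measurable Q)
    (hα0 : 0 < α) (hα1 : α < 1) (hQstar : 0 < Qstar) (hQpos : ∀ x, 0 < Q x)
    (hQle : ∀ x, Q x ≤ Qstar) {m : ℝ} (hm : (1 - α) * Qstar < m) :
    ContinuousOn (fun c => ∫ x, fixedPointDensity α Q c x ∂μ) (Ici m) := by
  have hmc {c : ℝ} (hc : c ∈ Ici m) : (1 - α) * Qstar < c := hm.trans_le hc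
  refine continuousOn_of_dominated (bound := fixedPointDensity α Q m)
    (fun c _ => (measurable_fixedPointDensity hQm).aestronglyMeasurable) (fun c hc => ?_)
    (integrable_fixedPointDensity hQm hα0 hα1 hQstar hQle hm) (Eventually.of_forall fun x => ?_)
  · refine Eventually.of_forall fun x => ?_
    have hx := one_sub_mul_lt_of_le hα1 (hQle x) hm
    rw [Real.norm_of_nonneg (fixedPointDensity_pos hα0 hα1 hQstar hQle (hmc hc) x).le]
    exact (strictAntiOn_div_one_sub_div hα0 (mul_pos (sub_pos.2 hα1) (hQpos x))).antitoneOn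
      hx (hx.trans_le hc) hc
  · intro c hc
    exact (continuousAt_div_one_sub_div (pos_of_one_sub_mul_lt hα1 hQstar (hmc hc)).ne'
      (one_sub_mul_lt_of_le hα1 (hQle x) (hmc hc)).ne).continuousWithinAt

lemma integral_fixedPointDensity_self_le_one [IsProbabilityMeasure μ] (hQm : Measurable Q)
    (hα0 : 0 < α) (hα1 : α < 1) (hQstar : 0 < Qstar) (hQle : ∀ x, Q x ≤ Qstar) :
    ∫ x, fixedPointDensity α Q Qstar x ∂μ ≤ 1 := by
  have hQ : (1 - α) * Qstar < Qstar := by nlinarith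
  calc ∫ x, fixedPointDensity α Q Qstar x ∂μ ≤ ∫ _, (1 : ℝ) ∂μ :=
        integral_mono (integrable_fixedPointDensity hQm hα0 hα1 hQstar hQle hQ)
          (integrable_const 1) fun x => div_one_sub_div_le_one hα0 hα1.le (hQle x) hQstar
    _ = 1 := by simp

lemma exists_one_lt_integral_fixedPointDensity [IsFiniteMeasure μ] (hQm : Measurable Q)
    (hα0 : 0 < α) (hα1 : α < 1) (hQstar : 0 < Qstar) (hQle : ∀ x, Q x ≤ Qstar)
    (h : 1 < ∫⁻ x, ENNReal.ofReal (fixedPointDensity α Q ((1 - α) * Qstar) x) ∂μ) :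
    ∃ c ∈ Ioo ((1 - α) * Qstar) Qstar, 1 < ∫ x, fixedPointDensity α Q c x ∂μ := by
  by_contra! hle
  obtain ⟨u, -, hu, hlim⟩ :=
    exists_seq_strictAnti_tendsto' (show (1 - α) * Qstar < Qstar by nlinarith)
  set f : ℕ → X → ENNReal := fun n x => ENNReal.ofReal (fixedPointDensity α Q (u n) x)
  have hpt : ∀ x, ENNReal.ofReal (fixedPointDensity α Q ((1 - α) * Qstar) x) ≤
      liminf (fun n => f n x) atTop := by
    intro x
    rcases (hQle x).lt_or_eq with hx | hx
    · exact ((ENNReal.continuous_ofReal.tendsto _).comp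
        (tendsto_fixedPointDensity_of_lt hα1 hQstar hx hlim)).liminf_eq.ge
    · simp [fixedPointDensity_eq_zero_of_eq hα1 hQstar hx]
  have hfn : ∀ n, ∫⁻ x, f n x ∂μ ≤ 1 := fun n => by
    rw [← ofReal_integral_eq_lintegral_ofReal
      (integrable_fixedPointDensity hQm hα0 hα1 hQstar hQle (hu n).1)
      (Eventually.of_forall fun x => (fixedPointDensity_pos hα0 hα1 hQstar hQle (hu n).1 x).le)]
    exact ENNReal.ofReal_le_one.2 (hle _ (hu n))
  refine h.not_ge ?_
  calc ∫⁻ x, ENNReal.ofReal (fixedPointDensity α Q ((1 - α) * Qstar) x) ∂μ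
      ≤ ∫⁻ x, liminf (fun n => f n x) atTop ∂μ := lintegral_mono hpt
    _ ≤ liminf (fun n => ∫⁻ x, f n x ∂μ) atTop :=
        lintegral_liminf_le fun n => (measurable_fixedPointDensity hQm).ennreal_ofReal
    _ ≤ 1 := liminf_le_of_frequently_le' (Frequently.of_forall hfn)

lemma exists_integral_fixedPointDensity_eq_one [IsProbabilityMeasure μ] (hQm : Measurable Q)
    (hα0 : 0 < α) (hα1 : α < 1) (hQstar : 0 < Qstar) (hQpos : ∀ x, 0 < Q x)
    (hQle : ∀ x, Q x ≤ Qstar)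
    (h : 1 < ∫⁻ x, ENNReal.ofReal (fixedPointDensity α Q ((1 - α) * Qstar) x) ∂μ) :
    ∃ c ∈ Ioc ((1 - α) * Qstar) Qstar, ∫ x, fixedPointDensity α Q c x ∂μ = 1 := by
  obtain ⟨c₁, hc₁, hlt⟩ := exists_one_lt_integral_fixedPointDensity hQm hα0 hα1 hQstar hQle h
  obtain ⟨c, hc, hc1⟩ := intermediate_value_Icc' hc₁.2.le
    ((continuousOn_integral_fixedPointDensity hQm hα0 hα1 hQstar hQpos hQle hc₁.1).mono
      Icc_subset_Ici_self)
    ⟨integral_fixedPointDensity_self_le_one hQm hα0 hα1 hQstar hQle, hlt.le⟩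
  exact ⟨c, ⟨hc₁.1.trans_le hc.1, hc.2⟩, hc1⟩

lemma integral_fixedPointDensity_mul_eq [IsProbabilityMeasure μ] (hQm : Measurable Q)
    (hα0 : 0 < α) (hα1 : α < 1) (hQstar : 0 < Qstar) (hQle : ∀ x, Q x ≤ Qstar)
    (hc : (1 - α) * Qstar < c) (hc1 : ∫ x, fixedPointDensity α Q c x ∂μ = 1) :
    ∫ x, fixedPointDensity α Q c x * Q x ∂μ = c := by
  have hi := integrable_fixedPointDensity (μ := μ) hQm hα0 hα1 hQstar hQle hc
  calc ∫ x, fixedPointDensity α Q c x * Q x ∂μ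
      = ∫ x, c / (1 - α) * (fixedPointDensity α Q c x - α) ∂μ :=
        integral_congr_ae (Eventually.of_forall fun x =>
          div_one_sub_div_mul hα1.ne (pos_of_one_sub_mul_lt hα1 hQstar hc).ne'
            (one_sub_mul_lt_of_le hα1 (hQle x) hc).ne)
    _ = c := by
        rw [integral_const_mul, integral_sub hi (integrable_const α), hc1]
        simp only [integral_const, probReal_univ, one_smul]
        field_simp [(sub_pos.2 hα1).ne']

lemma one_lt_lintegral_fixedPointDensity (hα0 : 0 < α) (hα1 : α < 1) (hQstar : Qstar ≠ 0)
    (hA3 : (∫⁻ x, ENNReal.ofReal (Qstar / (Qstar - Q x)) ∂μ)⁻¹ < ENNReal.ofReal α) :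
    1 < ∫⁻ x, ENNReal.ofReal (fixedPointDensity α Q ((1 - α) * Qstar) x) ∂μ := by
  simp_rw [fixedPointDensity, div_one_sub_div_one_sub_mul hα1.ne hQstar,
    ENNReal.ofReal_mul hα0.le]
  rw [lintegral_const_mul' _ _ ENNReal.ofReal_ne_top]
  rwa [← one_div, ENNReal.div_lt_iff (Or.inr one_ne_zero) (Or.inr ENNReal.one_ne_top)] at hA3

lemma le_of_forall_le_of_forall_measure_ne_zero {t : ℝ}
    (hess : ∀ ε > 0, μ {x | Qstar - ε < Q x} ≠ 0) (h : ∀ x, Q x ≤ t) : Qstar ≤ t := by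
  by_contra! ht
  refine hess (Qstar - t) (sub_pos.2 ht) ?_
  simp [(h _).not_gt]

lemma integral_mul_le_of_le [IsProbabilityMeasure μ] (hQ : ∀ x, 0 ≤ Q x)
    (hQle : ∀ x, Q x ≤ Qstar) {w : X → ℝ} (hw0 : ∀ x, 0 ≤ w x) (hwi : Integrable w μ)
    (hw1 : ∫ x, w x ∂μ = 1) : ∫ x, w x * Q x ∂μ ≤ Qstar := by
  calc ∫ x, w x * Q x ∂μ ≤ ∫ x, Qstar * w x ∂μ :=
        integral_mono_of_nonneg (Eventually.of_forall fun x => mul_nonneg (hw0 x) (hQ x))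
          (hwi.const_mul Qstar)
          (Eventually.of_forall fun x => by nlinarith [hw0 x, hQle x])
    _ = Qstar := by rw [integral_const_mul, hw1, mul_one]

lemma integral_mul_pos_of_fixed_point [IsProbabilityMeasure μ] (hα1 : α < 1)
    (hQ : ∀ x, 0 ≤ Q x) {w : X → ℝ} (hw0 : ∀ x, 0 ≤ w x) (hw1 : ∫ x, w x ∂μ = 1)
    (hfix : ∀ x, α + (1 - α) * Q x * w x / (∫ y, w y * Q y ∂μ) = w x) :
    0 < ∫ y, w y * Q y ∂μ := by
  refine (integral_nonneg fun y => mul_nonneg (hw0 y) (hQ y)).lt_of_ne' fun h0 => ?_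
  simp only [h0, div_zero, add_zero] at hfix
  simp only [← hfix, integral_const, probReal_univ, one_smul] at hw1
  exact hα1.ne hw1

lemma exists_eq_fixedPointDensity_of_fixed_point [IsProbabilityMeasure μ] (hα0 : 0 < α)
    (hα1 : α < 1) (hQpos : ∀ x, 0 < Q x) (hQle : ∀ x, Q x ≤ Qstar)
    (hess : ∀ ε > 0, μ {x | Qstar - ε < Q x} ≠ 0)
    (h : 1 < ∫⁻ x, ENNReal.ofReal (fixedPointDensity α Q ((1 - α) * Qstar) x) ∂μ)
    {w : X → ℝ} (hw0 : ∀ x, 0 ≤ w x) (hwi : Integrable w μ) (hw1 : ∫ x, w x ∂μ = 1)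
    (hfix : ∀ x, α + (1 - α) * Q x * w x / (∫ y, w y * Q y ∂μ) = w x) :
    ∃ c ∈ Ioc ((1 - α) * Qstar) Qstar,
      ∫ x, fixedPointDensity α Q c x ∂μ = 1 ∧ w = fixedPointDensity α Q c := by
  have hQ x : 0 ≤ Q x := (hQpos x).le
  set c := ∫ y, w y * Q y ∂μ
  have hc0 : 0 < c := integral_mul_pos_of_fixed_point hα1 hQ hw0 hw1 hfix
  have hw x := lt_and_eq_div_one_sub_div_of_add_mul_div_eq hα0 hc0 (hw0 x) (hfix x)
  have hwc : w = fixedPointDensity α Q c := funext fun x => (hw x).2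
  have hbc : (1 - α) * Qstar ≤ c := by
    rw [mul_comm, ← le_div_iff₀ (sub_pos.2 hα1)]
    exact le_of_forall_le_of_forall_measure_ne_zero hess fun x =>
      (le_div_iff₀ (sub_pos.2 hα1)).2 (by linarith [(hw x).1])
  have hne : (1 - α) * Qstar ≠ c := by
    intro hbc
    rw [hbc, ← hwc, ← ofReal_integral_eq_lintegral_ofReal hwi (Eventually.of_forall hw0), hw1,
      ENNReal.ofReal_one] at h
    exact h.false
  exact ⟨c, ⟨hbc.lt_of_ne hne, integral_mul_le_of_le hQ hQle hw0 hwi hw1⟩, hwc ▸ hw1, hwc⟩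

end FixedPointDensity

/-- Existence and uniqueness of the nondegenerate fixed point of the normalized
operator `L_N[w] = α + (1-α)·Q·w/⟨w,Q⟩` on densities w.r.t. `P_ref`:
there is a unique `c* ∈ ((1-α)Q*, Q*]` such that `w*(x) = α/(1-(1-α)Q(x)/c*)`
is a probability density; `⟨w*,Q⟩ = c*`, `w*` is a fixed point of `L_N`, and it
is the unique such fixed point among densities. -/
theorem nondegenerate_fixed_point
    {X : Type*} [MeasurableSpace X] (μ : Measure X) [IsProbabilityMeasure μ]
    (Q : X → ℝ) (hQm : Measurable Q)
    (Qstar : ℝ) (hQstar : 0 < Qstar)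
    (hQpos : ∀ x, 0 < Q x) (hQle : ∀ x, Q x ≤ Qstar)
    (hess : ∀ ε > 0, μ {x | Qstar - ε < Q x} ≠ 0)
    (α : ℝ) (hα : α ∈ Set.Ioo (0 : ℝ) 1)
    (hA3 : (∫⁻ x, ENNReal.ofReal (Qstar / (Qstar - Q x)) ∂μ)⁻¹
            < ENNReal.ofReal α) :
    ∃ c ∈ Set.Ioc ((1 - α) * Qstar) Qstar,
      (∫ x, α / (1 - (1 - α) * Q x / c) ∂μ = 1)
      ∧ (∫ x, (α / (1 - (1 - α) * Q x / c)) * Q x ∂μ = c)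
      ∧ (∀ x, α + (1 - α) * Q x * (α / (1 - (1 - α) * Q x / c)) / c
            = α / (1 - (1 - α) * Q x / c))
      ∧ (∀ c' ∈ Set.Ioc ((1 - α) * Qstar) Qstar,
            (∫ x, α / (1 - (1 - α) * Q x / c') ∂μ = 1) → c' = c)
      ∧ (∀ w : X → ℝ, Measurable w → (∀ x, 0 ≤ w x) → Integrable w μ →
            (∫ x, w x ∂μ = 1) →
            (∀ x, α + (1 - α) * Q x * w x / (∫ y, w y * Q y ∂μ) = w x) →
            ∀ x, w x = α / (1 - (1 - α) * Q x / c)) := by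
  obtain ⟨hα0, hα1⟩ := hα
  have hlim := one_lt_lintegral_fixedPointDensity (μ := μ) hα0 hα1 hQstar.ne' hA3
  obtain ⟨c, hc, hc1⟩ :=
    exists_integral_fixedPointDensity_eq_one hQm hα0 hα1 hQstar hQpos hQle hlim
  have huniq : ∀ c' ∈ Ioc ((1 - α) * Qstar) Qstar,
      ∫ x, fixedPointDensity α Q c' x ∂μ = 1 → c' = c := fun c' hc' hc'1 =>
    (strictAntiOn_integral_fixedPointDensity hQm hα0 hα1 hQstar hQpos hQle).injOn
      hc'.1 hc.1 (hc'1.trans hc1.symm)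
  refine ⟨c, hc, hc1, integral_fixedPointDensity_mul_eq hQm hα0 hα1 hQstar hQle hc.1 hc1,
    fun x => ?_, huniq, fun w _ hw0 hwi hw1 hfix => ?_⟩
  · exact add_mul_div_one_sub_div (pos_of_one_sub_mul_lt hα1 hQstar hc.1).ne'
      (one_sub_mul_lt_of_le hα1 (hQle x) hc.1).ne
  · obtain ⟨c', hc', hc'1, rfl⟩ :=
      exists_eq_fixedPointDensity_of_fixed_point hα0 hα1 hQpos hQle hess hlim hw0 hwi hw1 hfix
    rw [huniq c' hc' hc'1]
    exact fun _ => rfl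
end
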